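/- arXiv:1803.07290 — 3 statements merged into one kernel-verified Lean document; each statement's English description precedes it below -/
import Mathlib

section
/- Let a < b, M : [a,b] → ℝ continuous, u : [a,b] → ℝ continuous. Then ∫ₐᵇ (∫ₐ^s (s-η)·u(η) dη) · M(s) · (∫ₐ^s u(ζ) dζ) ds = ∫ₐᵇ ∫ₐᵇ u(s) · K(s,θ) · u(θ) dθ ds, where K(s,θ) = I(s-θ)·∫_s^b (η-s)·M(η) dη + I(θ-s)·∫_θ^b (η-s)·M(η) dη. -/
open MeasureTheory intervalIntegral Set

noncomputable def ind (x : ℝ) : ℝ := if 0 ≤ x then 1 else 0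

/-!
Both sides are the integral of `u s * u θ * (η - s) * M η` over the region
`{(s, θ, η) ∈ [a, b]³ | max s θ ≤ η}`. Integrating out `η` first gives the kernel `K s θ`
(except on the null diagonal `s = θ`), while integrating out `s` and `θ` first factors the
integrand into `(∫ s in a..η, (η - s) * u s) * M η * ∫ θ in a..η, u θ`. Fubini on the cube
identifies the two iterated integrals.
-/

theorem MeasureTheory.integral_integral_integral_swap {α β γ E : Type*} [MeasurableSpace α]
    [MeasurableSpace β] [MeasurableSpace γ] [NormedAddCommGroup E] [NormedSpace ℝ E]
    {μ : Measure α} {ν : Measure β} {ρ : Measure γ} [SFinite μ] [SFinite ν] [SFinite ρ]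
    {F : α → β → γ → E}
    (hF : Integrable (fun p : (α × β) × γ => F p.1.1 p.1.2 p.2) ((μ.prod ν).prod ρ)) :
    ∫ x, ∫ y, ∫ z, F x y z ∂ρ ∂ν ∂μ = ∫ z, ∫ x, ∫ y, F x y z ∂ν ∂μ ∂ρ := calc
  _ = ∫ p, ∫ z, F p.1 p.2 z ∂ρ ∂μ.prod ν := (integral_prod _ hF.integral_prod_left).symm
  _ = ∫ z, ∫ p, F p.1 p.2 z ∂μ.prod ν ∂ρ := integral_integral_swap hF
  _ = ∫ z, ∫ x, ∫ y, F x y z ∂ν ∂μ ∂ρ :=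
        integral_congr_ae <| hF.prod_left_ae.mono fun _ hz => integral_prod _ hz

theorem intervalIntegral.integral_integral_integral_swap {a b : ℝ} (hab : a ≤ b)
    {F : ℝ → ℝ → ℝ → ℝ} (hF : IntegrableOn (fun p : (ℝ × ℝ) × ℝ => F p.1.1 p.1.2 p.2)
      ((Icc a b ×ˢ Icc a b) ×ˢ Icc a b)) :
    ∫ x in a..b, ∫ y in a..b, ∫ z in a..b, F x y z
      = ∫ z in a..b, ∫ x in a..b, ∫ y in a..b, F x y z := by
  simp only [integral_of_le hab]
  refine MeasureTheory.integral_integral_integral_swap ?_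
  rw [Measure.prod_restrict, Measure.prod_restrict, ← Measure.volume_eq_prod,
    ← Measure.volume_eq_prod]
  exact hF.mono_set (prod_mono (prod_mono Ioc_subset_Icc_self Ioc_subset_Icc_self)
    Ioc_subset_Icc_self)

theorem intervalIntegral.integral_indicator_Ici {E : Type*} [NormedAddCommGroup E]
    [NormedSpace ℝ E] {μ : Measure ℝ} [NullSingletonClass μ] {f : ℝ → E} {a₁ a₂ a₃ : ℝ}
    (h : a₂ ∈ Icc a₁ a₃) :
    ∫ x in a₁..a₃, (Ici a₂).indicator f x ∂μ = ∫ x in a₂..a₃, f x ∂μ := by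
  have hinter : Ioi a₂ ∩ Ioc a₁ a₃ = Ioc a₂ a₃ := by
    rw [inter_comm, Ioc_inter_Ioi, sup_eq_right.2 h.1]
  rw [integral_of_le (h.1.trans h.2), integral_of_le h.2,
    MeasureTheory.integral_congr_ae
      (indicator_ae_eq_of_ae_eq_set (ae_restrict_of_ae Ioi_ae_eq_Ici.symm)),
    MeasureTheory.integral_indicator measurableSet_Ioi,
    Measure.restrict_restrict measurableSet_Ioi, hinter]

theorem ind_mul_add_ind_mul {s θ : ℝ} (h : s ≠ θ) (F : ℝ → ℝ) :
    ind (s - θ) * F s + ind (θ - s) * F θ = F (max s θ) := by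
  rcases h.lt_or_gt with h | h
  · simp [ind, h.le, not_le.2 h]
  · simp [ind, h.le, not_le.2 h]

noncomputable def cubeIntegrand (M u : ℝ → ℝ) (s θ η : ℝ) : ℝ :=
  if max s θ ≤ η then u s * u θ * (η - s) * M η else 0

section
variable {a b : ℝ} (M u : ℝ → ℝ)

theorem integral_cubeIntegrand {s θ : ℝ} (hs : s ∈ Icc a b) (hθ : θ ∈ Icc a b) :
    ∫ η in a..b, cubeIntegrand M u s θ η
      = u s * (∫ η in max s θ..b, (η - s) * M η) * u θ := by
  have hind : cubeIntegrand M u s θ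
      = (Ici (max s θ)).indicator fun η => u s * u θ * ((η - s) * M η) := by
    ext η; simp only [cubeIntegrand, indicator_apply, mem_Ici, mul_assoc]
  have hmax : max s θ ∈ Icc a b := ⟨le_max_of_le_left hs.1, max_le hs.2 hθ.2⟩
  rw [hind, intervalIntegral.integral_indicator_Ici hmax, intervalIntegral.integral_const_mul]
  ring

theorem integral_integral_cubeIntegrand {η : ℝ} (hη : η ∈ Icc a b) :
    ∫ s in a..b, ∫ θ in a..b, cubeIntegrand M u s θ η
      = (∫ s in a..η, (η - s) * u s) * M η * ∫ θ in a..η, u θ := by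
  have hinner : ∀ s, ∫ θ in a..b, cubeIntegrand M u s θ η
      = {x | x ≤ η}.indicator (fun s => (η - s) * u s * M η * ∫ θ in a..η, u θ) s := by
    intro s
    by_cases hs : s ≤ η
    · rw [indicator_of_mem (show s ∈ {x | x ≤ η} from hs),
        ← intervalIntegral.integral_indicator hη, ← intervalIntegral.integral_const_mul]
      congr 1 with θ
      by_cases hθ : θ ≤ η
      · simp [cubeIntegrand, hs, hθ]; ring
      · simp [cubeIntegrand, hθ]
    · rw [indicator_of_notMem (show s ∉ {x | x ≤ η} from hs)]
      simp [cubeIntegrand, hs]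
  simp only [hinner, intervalIntegral.integral_indicator hη, intervalIntegral.integral_mul_const]

theorem integrableOn_cubeIntegrand (hM : ContinuousOn M (Icc a b))
    (hu : ContinuousOn u (Icc a b)) :
    IntegrableOn (fun p : (ℝ × ℝ) × ℝ => cubeIntegrand M u p.1.1 p.1.2 p.2)
      ((Icc a b ×ˢ Icc a b) ×ˢ Icc a b) := by
  have hcont : ContinuousOn (fun p : (ℝ × ℝ) × ℝ => u p.1.1 * u p.1.2 * (p.2 - p.1.1) * M p.2)
      ((Icc a b ×ˢ Icc a b) ×ˢ Icc a b) :=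
    (((hu.comp (by fun_prop) fun p hp => hp.1.1).mul
      (hu.comp (by fun_prop) fun p hp => hp.1.2)).mul (by fun_prop)).mul
      (hM.comp (by fun_prop) fun p hp => hp.2)
  have hD : MeasurableSet {p : (ℝ × ℝ) × ℝ | max p.1.1 p.1.2 ≤ p.2} :=
    measurableSet_le (by fun_prop) (by fun_prop)
  have hind : (fun p : (ℝ × ℝ) × ℝ => cubeIntegrand M u p.1.1 p.1.2 p.2) =
      {p : (ℝ × ℝ) × ℝ | max p.1.1 p.1.2 ≤ p.2}.indicator
        fun p => u p.1.1 * u p.1.2 * (p.2 - p.1.1) * M p.2 := by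
    ext p; simp only [cubeIntegrand, indicator_apply, mem_ofPred_eq]
  rw [hind]
  exact (hcont.integrableOn_compact
    ((isCompact_Icc.prod isCompact_Icc).prod isCompact_Icc)).indicator hD

end

theorem stmt8 (a b : ℝ) (hab : a < b) (M u : ℝ → ℝ)
    (hM : ContinuousOn M (Set.Icc a b)) (hu : ContinuousOn u (Set.Icc a b)) :
    ∫ s in a..b, (∫ η in a..s, (s - η) * u η) * M s * (∫ ζ in a..s, u ζ)
      = ∫ s in a..b, ∫ θ in a..b,
          u s * (ind (s - θ) * (∫ η in s..b, (η - s) * M η)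
                 + ind (θ - s) * (∫ η in θ..b, (η - s) * M η)) * u θ := by
  have hI : uIcc a b = Icc a b := uIcc_of_le hab.le
  calc _ = ∫ η in a..b, ∫ s in a..b, ∫ θ in a..b, cubeIntegrand M u s θ η :=
        intervalIntegral.integral_congr fun η hη =>
          (integral_integral_cubeIntegrand M u (hI ▸ hη)).symm
    _ = ∫ s in a..b, ∫ θ in a..b, ∫ η in a..b, cubeIntegrand M u s θ η :=
        (intervalIntegral.integral_integral_integral_swap hab.le
          (integrableOn_cubeIntegrand M u hM hu)).symm
    _ = _ := intervalIntegral.integral_congr fun s hs => intervalIntegral.integral_congr_ae ?_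
  -- on the diagonal both indicators equal `ind 0 = 1`
  filter_upwards [Measure.ae_ne volume s] with θ hθs hθ
  rw [integral_cubeIntegrand M u (hI ▸ hs) (Ioc_subset_Icc_self (uIoc_of_le hab.le ▸ hθ)),
    ind_mul_add_ind_mul hθs.symm fun m => ∫ η in m..b, (η - s) * M η]
end

section
/- Let a < b, N : [a,b]×[a,b] → ℝ continuous, u : [a,b] → ℝ continuous. Then ∫ₐᵇ ∫ₐ^s (∫ₐ^s (s-η)·u(η) dη) · N(s,θ) · (∫ₐ^θ u(ζ) dζ) dθ ds = ∫ₐᵇ ∫ₐᵇ u(s) · K(s,θ) · u(θ) dθ ds, where K(s,θ) = I(s-θ)·∫_s^b ∫_θ^η (η-s)·N(η,ζ) dζ dη + I(θ-s)·∫_θ^b ∫_θ^η (η-s)·N(η,ζ) dζ dη. -/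
open MeasureTheory Set Function intervalIntegral

lemma intOn (c d e f : ℝ) (g : ℝ → ℝ → ℝ) (hg : Continuous (uncurry g)) :
    IntegrableOn (uncurry g) (Ioc c d ×ˢ Ioc e f) := by
  apply IntegrableOn.mono_set (t := Icc c d ×ˢ Icc e f)
  · exact hg.continuousOn.integrableOn_compact (isCompact_Icc.prod isCompact_Icc)
  · exact prod_mono Ioc_subset_Icc_self Ioc_subset_Icc_self

lemma rect_swap' {c d e f : ℝ} (hcd : c ≤ d) (hef : e ≤ f) (g : ℝ → ℝ → ℝ)
    (hg : IntegrableOn (uncurry g) (Ioc c d ×ˢ Ioc e f)) :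
    ∫ s in c..d, ∫ t in e..f, g s t = ∫ t in e..f, ∫ s in c..d, g s t := by
  rw [intervalIntegral.integral_of_le hcd, intervalIntegral.integral_of_le hef]
  simp_rw [intervalIntegral.integral_of_le hef, intervalIntegral.integral_of_le hcd]
  apply MeasureTheory.integral_integral_swap
  rw [Measure.prod_restrict, ← Measure.volume_eq_prod]
  exact hg

lemma rect_swap {c d e f : ℝ} (hcd : c ≤ d) (hef : e ≤ f) (g : ℝ → ℝ → ℝ)
    (hg : Continuous (uncurry g)) :
    ∫ s in c..d, ∫ t in e..f, g s t = ∫ t in e..f, ∫ s in c..d, g s t :=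
  rect_swap' hcd hef g (intOn c d e f g hg)

lemma triangle_swap {c d : ℝ} (hcd : c ≤ d) (g : ℝ → ℝ → ℝ)
    (hg : Continuous (uncurry g)) :
    ∫ s in c..d, ∫ t in c..s, g s t = ∫ t in c..d, ∫ s in t..d, g s t := by
  set G : ℝ → ℝ → ℝ := fun s t => if t ≤ s then g s t else 0 with hG
  have hmeas : MeasurableSet {p : ℝ × ℝ | p.2 ≤ p.1} :=
    measurableSet_le measurable_snd measurable_fst
  have h1 : ∫ s in c..d, ∫ t in c..s, g s t = ∫ s in c..d, ∫ t in c..d, G s t := by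
    apply intervalIntegral.integral_congr
    intro s hs
    rw [uIcc_of_le hcd] at hs
    show ∫ t in c..s, g s t = ∫ t in c..d, G s t
    rw [intervalIntegral.integral_of_le hs.1, intervalIntegral.integral_of_le hcd]
    have ht : ∀ t, G s t = (Iic s).indicator (g s) t := by
      intro t; simp [G, Set.indicator_apply, Set.mem_Iic]
    simp_rw [ht]
    rw [MeasureTheory.integral_indicator measurableSet_Iic,
      Measure.restrict_restrict measurableSet_Iic]
    have hset : Iic s ∩ Ioc c d = Ioc c s := by
      ext t; simp only [Set.mem_inter_iff, Set.mem_Iic, Set.mem_Ioc]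
      exact ⟨fun ⟨h1,h2,h3⟩ => ⟨h2, h1⟩, fun ⟨h2, h1⟩ => ⟨h1, h2, le_trans h1 hs.2⟩⟩
    rw [hset]
  have h2 : ∫ t in c..d, ∫ s in t..d, g s t = ∫ t in c..d, ∫ s in c..d, G s t := by
    apply intervalIntegral.integral_congr_ae
    rw [uIoc_of_le hcd]
    filter_upwards [] with t ht
    show ∫ s in t..d, g s t = ∫ s in c..d, G s t
    rw [intervalIntegral.integral_of_le ht.2, intervalIntegral.integral_of_le hcd]
    have hs : ∀ s, G s t = (Ici t).indicator (fun s => g s t) s := by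
      intro s; simp [G, Set.indicator_apply, Set.mem_Ici]
    simp_rw [hs]
    rw [MeasureTheory.integral_indicator measurableSet_Ici,
      Measure.restrict_restrict measurableSet_Ici]
    have : Ici t ∩ Ioc c d = Icc t d := by
      ext s; simp only [Set.mem_inter_iff, Set.mem_Ici, Set.mem_Ioc, Set.mem_Icc]
      constructor
      · rintro ⟨h1, h2, h3⟩; exact ⟨h1, h3⟩
      · rintro ⟨h1, h2⟩; exact ⟨h1, lt_of_lt_of_le ht.1 h1, h2⟩
    rw [this, MeasureTheory.integral_Icc_eq_integral_Ioc]
  rw [h1, h2]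
  rw [intervalIntegral.integral_of_le hcd]
  simp_rw [intervalIntegral.integral_of_le hcd]
  apply MeasureTheory.integral_integral_swap
  rw [Measure.prod_restrict, ← Measure.volume_eq_prod]
  have hGi : uncurry G = ({p : ℝ × ℝ | p.2 ≤ p.1}).indicator (uncurry g) := by
    ext p; simp [uncurry, G, Set.indicator_apply]
  show Integrable (uncurry G) _
  rw [hGi]
  exact (intOn c d c d g hg).indicator hmeas


lemma comp2 {α : Type*} [TopologicalSpace α] {N : ℝ → ℝ → ℝ}
    (hN : Continuous fun p : ℝ × ℝ => N p.1 p.2) {f g : α → ℝ}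
    (hf : Continuous f) (hg : Continuous g) : Continuous fun x => N (f x) (g x) :=
  hN.comp (hf.prodMk hg)

theorem key (a b : ℝ) (hab : a ≤ b) (N : ℝ → ℝ → ℝ) (u : ℝ → ℝ)
    (hN : Continuous (fun p : ℝ × ℝ => N p.1 p.2)) (hu : Continuous u) :
    ∫ s in a..b, ∫ θ in a..s, (∫ η in a..s, (s - η) * u η) * N s θ * (∫ ζ in a..θ, u ζ)
      = ∫ s in a..b, ∫ θ in a..b,
          u s * (ind (s - θ) * (∫ η in s..b, ∫ ζ in θ..η, (η - s) * N η ζ)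
                 + ind (θ - s) * (∫ η in θ..b, ∫ ζ in θ..η, (η - s) * N η ζ)) * u θ := by
  have hNii : ∀ s c d : ℝ, IntervalIntegrable (fun θ => N s θ) volume c d :=
    fun s c d => (comp2 hN continuous_const continuous_id).intervalIntegrable c d
  set C : ℝ → ℝ → ℝ := fun s ζ => ∫ θ in ζ..s, N s θ with hCdef
  have hCeq : ∀ s ζ, C s ζ = (∫ θ in a..s, N s θ) - (∫ θ in a..ζ, N s θ) := fun s ζ =>
    (intervalIntegral.integral_interval_sub_left (hNii s a s) (hNii s a ζ)).symm
  have hC : Continuous (uncurry C) := by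
    have hinner : Continuous fun q : (ℝ × ℝ) × ℝ => N q.1.1 q.2 :=
      comp2 hN (continuous_fst.comp continuous_fst) continuous_snd
    have hinner' : Continuous (uncurry fun (p : ℝ × ℝ) (θ : ℝ) => N p.1 θ) := hinner
    have h1 : Continuous (fun p : ℝ × ℝ => ∫ θ in a..p.1, N p.1 θ) :=
      intervalIntegral.continuous_parametric_intervalIntegral_of_continuous hinner' continuous_fst
    have h2 : Continuous (fun p : ℝ × ℝ => ∫ θ in a..p.2, N p.1 θ) :=
      intervalIntegral.continuous_parametric_intervalIntegral_of_continuous hinner' continuous_snd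
    have : uncurry C = fun p : ℝ × ℝ =>
        (∫ θ in a..p.1, N p.1 θ) - ∫ θ in a..p.2, N p.1 θ := by
      funext p; exact hCeq p.1 p.2
    rw [this]; exact h1.sub h2
  set g : ℝ → ℝ → ℝ → ℝ := fun s η ζ => (s - η) * u η * (u ζ * C s ζ) with hgdef
  -- continuity of g in all three variables jointly (curried as (s, η, ζ))
  have hgc : Continuous (fun q : ℝ × ℝ × ℝ => g q.1 q.2.1 q.2.2) := by
    apply Continuous.mul
    · exact (continuous_fst.sub (continuous_fst.comp continuous_snd)).mul
        (hu.comp (continuous_fst.comp continuous_snd))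
    · exact (hu.comp (continuous_snd.comp continuous_snd)).mul
        (comp2 hC continuous_fst (continuous_snd.comp continuous_snd))
  set F : ℝ → ℝ → ℝ := fun s ζ => ∫ η in a..s, g s η ζ with hFdef
  have hF : Continuous (uncurry F) := by
    have huc : Continuous (uncurry fun (p : ℝ × ℝ) (η : ℝ) => g p.1 η p.2) :=
      hgc.comp ((continuous_fst.comp continuous_fst).prodMk
        (continuous_snd.prodMk (continuous_snd.comp continuous_fst)))
    exact intervalIntegral.continuous_parametric_intervalIntegral_of_continuous huc continuous_fst
  -- T1, T2 and their continuity
  set T1 : ℝ → ℝ → ℝ := fun η ζ => ∫ s in η..b, (s - η) * C s ζ with hT1def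
  set T2 : ℝ → ℝ → ℝ := fun η ζ => ∫ s in ζ..b, (s - η) * C s ζ with hT2def
  have hfc : Continuous (uncurry fun (p : ℝ × ℝ) (s : ℝ) => (s - p.1) * C s p.2) :=
    (continuous_snd.sub (continuous_fst.comp continuous_fst)).mul
      (comp2 hC continuous_snd (continuous_snd.comp continuous_fst))
  have hii : ∀ (p : ℝ × ℝ) (c d : ℝ),
      IntervalIntegrable (fun s => (s - p.1) * C s p.2) volume c d := fun p c d =>
    ((continuous_id.sub continuous_const).mul
      (comp2 hC continuous_id continuous_const)).intervalIntegrable c d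
  have hT1 : Continuous (uncurry T1) := by
    have e : uncurry T1 = fun p : ℝ × ℝ =>
        (∫ s in a..b, (s - p.1) * C s p.2) - ∫ s in a..p.1, (s - p.1) * C s p.2 := by
      funext p
      exact (intervalIntegral.integral_interval_sub_left (hii p a b) (hii p a p.1)).symm
    rw [e]
    exact (intervalIntegral.continuous_parametric_intervalIntegral_of_continuous' hfc a b).sub
      (intervalIntegral.continuous_parametric_intervalIntegral_of_continuous hfc continuous_fst)
  have hT2 : Continuous (uncurry T2) := by
    have e : uncurry T2 = fun p : ℝ × ℝ =>
        (∫ s in a..b, (s - p.1) * C s p.2) - ∫ s in a..p.2, (s - p.1) * C s p.2 := by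
      funext p
      exact (intervalIntegral.integral_interval_sub_left (hii p a b) (hii p a p.2)).symm
    rw [e]
    exact (intervalIntegral.continuous_parametric_intervalIntegral_of_continuous' hfc a b).sub
      (intervalIntegral.continuous_parametric_intervalIntegral_of_continuous hfc continuous_snd)
  have hTT1 : ∀ η ζ, (∫ s in η..b, ∫ θ in ζ..s, (s - η) * N s θ) = T1 η ζ := by
    intro η ζ
    apply intervalIntegral.integral_congr
    intro s _
    exact intervalIntegral.integral_const_mul _ _
  have hTT2 : ∀ η ζ, (∫ s in ζ..b, ∫ θ in ζ..s, (s - η) * N s θ) = T2 η ζ := by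
    intro η ζ
    apply intervalIntegral.integral_congr
    intro s _
    exact intervalIntegral.integral_const_mul _ _
  -- the kernel appearing on the right-hand side
  set P : ℝ → ℝ → ℝ := fun η ζ =>
    u η * (ind (η - ζ) * (∫ s in η..b, ∫ θ in ζ..s, (s - η) * N s θ)
      + ind (ζ - η) * (∫ s in ζ..b, ∫ θ in ζ..s, (s - η) * N s θ)) * u ζ with hPdef
  have hne : ∀ c : ℝ, ∀ᵐ η : ℝ, η ≠ c := by
    intro c
    rw [MeasureTheory.ae_iff]
    simp only [ne_eq, not_not]
    have : {η : ℝ | η = c} = {c} := by ext x; simp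
    rw [this]
    exact measure_singleton c
  have hPlt : ∀ η ζ, η < ζ →
      P η ζ = u η * (∫ s in ζ..b, ∫ θ in ζ..s, (s - η) * N s θ) * u ζ := by
    intro η ζ hlt
    simp only [hPdef, ind]
    rw [if_neg (not_le.mpr (by linarith : η - ζ < 0)), if_pos (by linarith : (0:ℝ) ≤ ζ - η)]
    ring
  have hPgt : ∀ η ζ, ζ < η →
      P η ζ = u η * (∫ s in η..b, ∫ θ in ζ..s, (s - η) * N s θ) * u ζ := by
    intro η ζ hlt
    simp only [hPdef, ind]
    rw [if_pos (by linarith : (0:ℝ) ≤ η - ζ), if_neg (not_le.mpr (by linarith : ζ - η < 0))]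
    ring
  -- Step 1: rewrite the inner double integral
  have step1 : Set.EqOn
      (fun s => ∫ θ in a..s, (∫ η in a..s, (s - η) * u η) * N s θ * (∫ ζ in a..θ, u ζ))
      (fun s => ∫ ζ in a..s, F s ζ) (Set.uIcc a b) := by
    intro s hs
    rw [uIcc_of_le hab] at hs
    show (∫ θ in a..s, (∫ η in a..s, (s - η) * u η) * N s θ * (∫ ζ in a..θ, u ζ))
        = ∫ ζ in a..s, F s ζ
    set A := ∫ η in a..s, (s - η) * u η with hA
    have e1 : ∀ θ, A * N s θ * (∫ ζ in a..θ, u ζ) = ∫ ζ in a..θ, A * N s θ * u ζ := by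
      intro θ
      rw [← intervalIntegral.integral_const_mul]
    simp_rw [e1]
    rw [triangle_swap hs.1 (fun θ ζ => A * N s θ * u ζ)
      ((continuous_const.mul (comp2 hN continuous_const continuous_fst)).mul
        (hu.comp continuous_snd))]
    apply intervalIntegral.integral_congr
    intro ζ _
    show ∫ θ in ζ..s, A * N s θ * u ζ = F s ζ
    have e2 : ∀ θ, A * N s θ * u ζ = (A * u ζ) * N s θ := fun θ => by ring
    simp_rw [e2]
    rw [intervalIntegral.integral_const_mul]
    show A * u ζ * C s ζ = ∫ η in a..s, g s η ζ
    rw [show A * u ζ * C s ζ = A * (u ζ * C s ζ) by ring, hA,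
      ← intervalIntegral.integral_mul_const]
  -- Step 3: for each ζ, compute the inner integral of F
  have step3 : Set.EqOn (fun ζ => ∫ s in ζ..b, F s ζ)
      (fun ζ => ∫ η in a..b, P η ζ) (Set.uIcc a b) := by
    intro ζ hζ
    rw [uIcc_of_le hab] at hζ
    obtain ⟨haζ, hζb⟩ := hζ
    show ∫ s in ζ..b, F s ζ = ∫ η in a..b, P η ζ
    have hgcont : ∀ s : ℝ, Continuous fun η => g s η ζ := fun s =>
      hgc.comp (continuous_const.prodMk (continuous_id.prodMk continuous_const))
    have hsplit : ∀ s : ℝ, F s ζ = (∫ η in a..ζ, g s η ζ) + ∫ η in ζ..s, g s η ζ := fun s =>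
      (intervalIntegral.integral_add_adjacent_intervals
        ((hgcont s).intervalIntegrable a ζ) ((hgcont s).intervalIntegrable ζ s)).symm
    have hgsη : Continuous (uncurry fun (s η : ℝ) => g s η ζ) :=
      hgc.comp (continuous_fst.prodMk (continuous_snd.prodMk continuous_const))
    have hI1 : Continuous fun s => ∫ η in a..ζ, g s η ζ :=
      intervalIntegral.continuous_parametric_intervalIntegral_of_continuous' hgsη a ζ
    have hI2 : Continuous fun s => ∫ η in ζ..s, g s η ζ :=
      intervalIntegral.continuous_parametric_intervalIntegral_of_continuous hgsη continuous_id
    simp_rw [hsplit]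
    rw [intervalIntegral.integral_add (hI1.intervalIntegrable ζ b) (hI2.intervalIntegrable ζ b)]
    rw [rect_swap hζb haζ (fun s η => g s η ζ) hgsη]
    rw [triangle_swap hζb (fun s η => g s η ζ) hgsη]
    -- pointwise computation of the inner integrals
    have hkey : ∀ (c : ℝ) (η : ℝ),
        u η * (∫ s in c..b, ∫ θ in ζ..s, (s - η) * N s θ) * u ζ = ∫ s in c..b, g s η ζ := by
      intro c η
      have e : ∀ s : ℝ, (∫ θ in ζ..s, (s - η) * N s θ) = (s - η) * C s ζ := fun s =>
        intervalIntegral.integral_const_mul _ _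
      simp_rw [e]
      rw [show u η * (∫ s in c..b, (s - η) * C s ζ) * u ζ
            = (∫ s in c..b, (s - η) * C s ζ) * (u η * u ζ) by ring,
        ← intervalIntegral.integral_mul_const]
      apply intervalIntegral.integral_congr
      intro s _
      show (s - η) * C s ζ * (u η * u ζ) = (s - η) * u η * (u ζ * C s ζ)
      ring
    have congr2 : (∫ η in a..ζ, ∫ s in ζ..b, g s η ζ) = ∫ η in a..ζ, P η ζ := by
      apply intervalIntegral.integral_congr_ae
      filter_upwards [hne ζ] with η hη hmem
      rw [uIoc_of_le haζ] at hmem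
      have hlt : η < ζ := lt_of_le_of_ne hmem.2 hη
      rw [← hkey ζ η, hPlt η ζ hlt]
    have congr1 : (∫ η in ζ..b, ∫ s in η..b, g s η ζ) = ∫ η in ζ..b, P η ζ := by
      apply intervalIntegral.integral_congr_ae
      filter_upwards [] with η hmem
      rw [uIoc_of_le hζb] at hmem
      rw [← hkey η η, hPgt η ζ hmem.1]
    rw [congr2, congr1]
    -- integrability of P (· , ζ) on the two pieces
    have hc2 : Continuous fun η => u η * (∫ s in ζ..b, ∫ θ in ζ..s, (s - η) * N s θ) * u ζ := by
      simp_rw [hTT2]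
      exact (hu.mul (comp2 hT2 continuous_id continuous_const)).mul continuous_const
    have hc1 : Continuous fun η => u η * (∫ s in η..b, ∫ θ in ζ..s, (s - η) * N s θ) * u ζ := by
      simp_rw [hTT1]
      exact (hu.mul (comp2 hT1 continuous_id continuous_const)).mul continuous_const
    have hPi1 : IntervalIntegrable (fun η => P η ζ) volume a ζ := by
      rw [intervalIntegrable_iff, uIoc_of_le haζ]
      apply MeasureTheory.Integrable.congr (hc2.integrableOn_Ioc)
      filter_upwards [MeasureTheory.ae_restrict_of_ae (hne ζ),
        MeasureTheory.ae_restrict_mem measurableSet_Ioc] with η hη hmem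
      exact (hPlt η ζ (lt_of_le_of_ne hmem.2 hη)).symm
    have hPi2 : IntervalIntegrable (fun η => P η ζ) volume ζ b := by
      rw [intervalIntegrable_iff, uIoc_of_le hζb]
      apply MeasureTheory.Integrable.congr (hc1.integrableOn_Ioc)
      filter_upwards [MeasureTheory.ae_restrict_mem measurableSet_Ioc] with η hmem
      exact (hPgt η ζ hmem.1).symm
    exact intervalIntegral.integral_add_adjacent_intervals hPi1 hPi2
  -- integrability of P for the final swap
  have hPswap : IntegrableOn (uncurry fun ζ η => P η ζ) (Ioc a b ×ˢ Ioc a b) := by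
    have hsplitP : (uncurry fun ζ η => P η ζ)
        = ({p : ℝ × ℝ | p.1 ≤ p.2}).indicator
            (fun p => u p.2 * (∫ s in p.2..b, ∫ θ in p.1..s, (s - p.2) * N s θ) * u p.1)
          + ({p : ℝ × ℝ | p.2 ≤ p.1}).indicator
            (fun p => u p.2 * (∫ s in p.1..b, ∫ θ in p.1..s, (s - p.2) * N s θ) * u p.1) := by
      funext p
      show P p.2 p.1 = _
      simp only [hPdef, Pi.add_apply, Set.indicator_apply, Set.mem_setOf_eq, ind, sub_nonneg]
      by_cases h1 : p.1 ≤ p.2 <;> by_cases h2 : p.2 ≤ p.1 <;>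
        simp only [h1, h2, if_true, if_false] <;> ring
    have hcont1 : Continuous fun p : ℝ × ℝ =>
        u p.2 * (∫ s in p.2..b, ∫ θ in p.1..s, (s - p.2) * N s θ) * u p.1 := by
      simp_rw [hTT1]
      exact ((hu.comp continuous_snd).mul (comp2 hT1 continuous_snd continuous_fst)).mul
        (hu.comp continuous_fst)
    have hcont2 : Continuous fun p : ℝ × ℝ =>
        u p.2 * (∫ s in p.1..b, ∫ θ in p.1..s, (s - p.2) * N s θ) * u p.1 := by
      simp_rw [hTT2]
      exact ((hu.comp continuous_snd).mul (comp2 hT2 continuous_snd continuous_fst)).mul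
        (hu.comp continuous_fst)
    have hio : ∀ f : ℝ × ℝ → ℝ, Continuous f → IntegrableOn f (Ioc a b ×ˢ Ioc a b) := by
      intro f hf
      apply IntegrableOn.mono_set (t := Icc a b ×ˢ Icc a b)
      · exact hf.continuousOn.integrableOn_compact (isCompact_Icc.prod isCompact_Icc)
      · exact prod_mono Ioc_subset_Icc_self Ioc_subset_Icc_self
    rw [hsplitP]
    exact ((hio _ hcont1).indicator (measurableSet_le measurable_fst measurable_snd)).add
      ((hio _ hcont2).indicator (measurableSet_le measurable_snd measurable_fst))
  calc (∫ s in a..b, ∫ θ in a..s, (∫ η in a..s, (s - η) * u η) * N s θ * (∫ ζ in a..θ, u ζ))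
      = ∫ s in a..b, ∫ ζ in a..s, F s ζ := intervalIntegral.integral_congr step1
    _ = ∫ ζ in a..b, ∫ s in ζ..b, F s ζ := triangle_swap hab F hF
    _ = ∫ ζ in a..b, ∫ η in a..b, P η ζ := intervalIntegral.integral_congr step3
    _ = ∫ η in a..b, ∫ ζ in a..b, P η ζ := rect_swap' hab hab (fun ζ η => P η ζ) hPswap
    _ = _ := rfl

theorem stmt9 (a b : ℝ) (hab : a < b) (N : ℝ → ℝ → ℝ) (u : ℝ → ℝ)
    (hN : ContinuousOn (fun p : ℝ × ℝ => N p.1 p.2) (Set.Icc a b ×ˢ Set.Icc a b))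
    (hu : ContinuousOn u (Set.Icc a b)) :
    ∫ s in a..b, ∫ θ in a..s, (∫ η in a..s, (s - η) * u η) * N s θ * (∫ ζ in a..θ, u ζ)
      = ∫ s in a..b, ∫ θ in a..b,
          u s * (ind (s - θ) * (∫ η in s..b, ∫ ζ in θ..η, (η - s) * N η ζ)
                 + ind (θ - s) * (∫ η in θ..b, ∫ ζ in θ..η, (η - s) * N η ζ)) * u θ := by
  -- extend N and u continuously to the whole space by Tietze
  obtain ⟨Ng, hNg⟩ := ContinuousMap.exists_restrict_eq
    (isClosed_Icc.prod isClosed_Icc) (ContinuousMap.mk _ hN.restrict)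
  obtain ⟨ug, hug⟩ := ContinuousMap.exists_restrict_eq isClosed_Icc
    (ContinuousMap.mk _ hu.restrict)
  set N' : ℝ → ℝ → ℝ := fun s θ => Ng (s, θ) with hN'def
  set u' : ℝ → ℝ := fun x => ug x with hu'def
  have hNeq : ∀ x y : ℝ, x ∈ Set.Icc a b → y ∈ Set.Icc a b → N' x y = N x y := by
    intro x y hx hy
    have := ContinuousMap.congr_fun hNg ⟨(x, y), ⟨hx, hy⟩⟩
    simpa using this
  have hueq : ∀ x ∈ Set.Icc a b, u' x = u x := by
    intro x hx
    have := ContinuousMap.congr_fun hug ⟨x, hx⟩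
    simpa using this
  have hN' : Continuous (fun p : ℝ × ℝ => N' p.1 p.2) := Ng.continuous
  have hu' : Continuous u' := ug.continuous
  have hmem : ∀ {x y : ℝ}, x ∈ Set.Icc a b → y ∈ Set.Icc a b →
      Set.uIcc x y ⊆ Set.Icc a b := fun hx hy => Set.uIcc_subset_Icc hx hy
  have hab' : a ≤ b := hab.le
  have haI : a ∈ Set.Icc a b := ⟨le_refl a, hab'⟩
  have hbI : b ∈ Set.Icc a b := ⟨hab', le_refl b⟩
  have hL : (∫ s in a..b, ∫ θ in a..s,
        (∫ η in a..s, (s - η) * u η) * N s θ * (∫ ζ in a..θ, u ζ))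
      = ∫ s in a..b, ∫ θ in a..s,
        (∫ η in a..s, (s - η) * u' η) * N' s θ * (∫ ζ in a..θ, u' ζ) := by
    apply intervalIntegral.integral_congr
    intro s hs
    rw [uIcc_of_le hab'] at hs
    apply intervalIntegral.integral_congr
    intro θ hθ
    dsimp only
    have hθ' : θ ∈ Set.Icc a b := hmem haI hs hθ
    congr 1
    · congr 1
      · apply intervalIntegral.integral_congr
        intro η hη
        dsimp only
        rw [hueq η (hmem haI hs hη)]
      · exact (hNeq s θ hs hθ').symm
    · apply intervalIntegral.integral_congr
      intro ζ hζ
      rw [hueq ζ (hmem haI hθ' hζ)]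
  have hR : (∫ s in a..b, ∫ θ in a..b,
        u s * (ind (s - θ) * (∫ η in s..b, ∫ ζ in θ..η, (η - s) * N η ζ)
          + ind (θ - s) * (∫ η in θ..b, ∫ ζ in θ..η, (η - s) * N η ζ)) * u θ)
      = ∫ s in a..b, ∫ θ in a..b,
        u' s * (ind (s - θ) * (∫ η in s..b, ∫ ζ in θ..η, (η - s) * N' η ζ)
          + ind (θ - s) * (∫ η in θ..b, ∫ ζ in θ..η, (η - s) * N' η ζ)) * u' θ := by
    apply intervalIntegral.integral_congr
    intro s hs
    rw [uIcc_of_le hab'] at hs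
    apply intervalIntegral.integral_congr
    intro θ hθ
    dsimp only
    rw [uIcc_of_le hab'] at hθ
    rw [hueq s hs, hueq θ hθ]
    have e1 : (∫ η in s..b, ∫ ζ in θ..η, (η - s) * N η ζ)
        = ∫ η in s..b, ∫ ζ in θ..η, (η - s) * N' η ζ := by
      apply intervalIntegral.integral_congr
      intro η hη
      dsimp only
      have hη' : η ∈ Set.Icc a b := hmem hs hbI hη
      apply intervalIntegral.integral_congr
      intro ζ hζ
      dsimp only
      rw [hNeq η ζ hη' (hmem hθ hη' hζ)]
    have e2 : (∫ η in θ..b, ∫ ζ in θ..η, (η - s) * N η ζ)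
        = ∫ η in θ..b, ∫ ζ in θ..η, (η - s) * N' η ζ := by
      apply intervalIntegral.integral_congr
      intro η hη
      dsimp only
      have hη' : η ∈ Set.Icc a b := hmem hθ hbI hη
      apply intervalIntegral.integral_congr
      intro ζ hζ
      dsimp only
      rw [hNeq η ζ hη' (hmem hθ hη' hζ)]
    rw [e1, e2]
  rw [hL, hR]
  exact key a b hab' N' u' hN' hu'
end

section
/- Let a < b, N : [a,b]×[a,b] → ℝ continuous, u : [a,b] → ℝ continuous. Then ∫ₐᵇ ∫_s^b (∫ₐ^s (s-η)·u(η) dη) · N(s,θ) · (∫ₐ^θ u(ζ) dζ) dθ ds = ∫ₐᵇ ∫ₐᵇ u(s) · K(s,θ) · u(θ) dθ ds, where K(s,θ) = I(s-θ)·∫_s^b ∫_s^ζ (η-s)·N(η,ζ) dη dζ + I(θ-s)·∫_θ^b ∫_s^ζ (η-s)·N(η,ζ) dη dζ. -/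
/-!
Write `B θ = ∫_a^θ u` and `M η θ = ∫_η^θ (s - η) N(s, θ) ds`. Exchanging the order of
integration over triangles turns the left side into `∫_a^b u(η) ∫_η^b M(η, θ) B(θ) dθ dη`.
Splitting `B θ = B η + ∫_η^θ u` and exchanging once more gives
`B(η) K(η, η) + ∫_η^b u(ζ) K(η, ζ) dζ` with `K(η, ζ) = ∫_ζ^b M(η, ·)`, which is the inner
integral on the right at `s = η` once the indicators split it at `θ = s`.
Every exchange is Fubini on a square for a continuous integrand; to get global continuity,
`N` and `u` are first replaced by their extensions clamped to `[a, b]`, which changes neither side.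
-/

open MeasureTheory intervalIntegral Set Function

theorem continuous_parametric_intervalIntegral_of_continuous_bounds {X : Type*}
    [TopologicalSpace X] {f : X → ℝ → ℝ} (hf : Continuous (uncurry f)) {l r : X → ℝ}
    (hl : Continuous l) (hr : Continuous r) :
    Continuous fun x => ∫ t in l x..r x, f x t := by
  have hsub : ∀ x, ∫ t in l x..r x, f x t
      = (∫ t in (0 : ℝ)..r x, f x t) - ∫ t in (0 : ℝ)..l x, f x t :=
    fun x => (integral_interval_sub_left ((hf.uncurry_left x).intervalIntegrable _ _)
      ((hf.uncurry_left x).intervalIntegrable _ _)).symm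
  simp_rw [hsub]
  fun_prop

theorem intervalIntegral_triangle_swap {a b : ℝ} (hab : a ≤ b) {f : ℝ → ℝ → ℝ}
    (hf : Continuous (uncurry f)) :
    ∫ x in a..b, ∫ y in x..b, f x y = ∫ y in a..b, ∫ x in a..y, f x y := by
  set G : ℝ × ℝ → ℝ := {p : ℝ × ℝ | p.1 < p.2}.indicator (uncurry f)
  have hGi : Integrable G ((volume.restrict (Ioc a b)).prod (volume.restrict (Ioc a b))) := by
    rw [Measure.prod_restrict]
    exact ((hf.continuousOn.integrableOn_compact (isCompact_Icc.prod isCompact_Icc)).mono_set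
      (prod_mono Ioc_subset_Icc_self Ioc_subset_Icc_self)).indicator
      (measurableSet_lt measurable_fst measurable_snd)
  have hL : ∫ x in a..b, ∫ y in x..b, f x y = ∫ x in Ioc a b, ∫ y in Ioc a b, G (x, y) := by
    rw [integral_of_le hab]
    refine setIntegral_congr_fun measurableSet_Ioc fun x hx => ?_
    have hG : ∀ y, G (x, y) = (Ioi x).indicator (f x) y := fun y => rfl
    simp_rw [hG, integral_of_le hx.2]
    rw [setIntegral_indicator measurableSet_Ioi, Ioc_inter_Ioi, sup_eq_right.2 hx.1.le]
  have hR : ∫ y in a..b, ∫ x in a..y, f x y = ∫ y in Ioc a b, ∫ x in Ioc a b, G (x, y) := by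
    rw [integral_of_le hab]
    refine setIntegral_congr_fun measurableSet_Ioc fun y hy => ?_
    have hG : ∀ x, G (x, y) = (Iio y).indicator (fun x => f x y) x := fun x => rfl
    have hIoo : Ioc a b ∩ Iio y = Ioo a y := by
      ext x
      simp only [mem_inter_iff, mem_Ioc, mem_Iio, mem_Ioo]
      exact ⟨fun h => ⟨h.1.1, h.2⟩, fun h => ⟨⟨h.1, h.2.le.trans hy.2⟩, h.2⟩⟩
    simp_rw [hG, integral_of_le hy.1.le]
    rw [setIntegral_indicator measurableSet_Iio, hIoo, integral_Ioc_eq_integral_Ioo]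
  rw [hL, hR, integral_integral_swap (f := fun x y => G (x, y)) hGi]

theorem ind_sub_mul_eq_indicator (s θ : ℝ) (f : ℝ → ℝ) :
    ind (s - θ) * f θ = (Iic s).indicator f θ := by
  simp [ind, indicator, sub_nonneg]

theorem ind_sub_mul_eq_indicator' (s θ : ℝ) (f : ℝ → ℝ) :
    ind (θ - s) * f θ = (Ici s).indicator f θ := by
  simp [ind, indicator, sub_nonneg]

theorem integral_ind_sub_mul {a s b : ℝ} (has : a ≤ s) (hsb : s ≤ b) (f : ℝ → ℝ) :
    ∫ θ in a..b, ind (s - θ) * f θ = ∫ θ in a..s, f θ := by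
  simp_rw [ind_sub_mul_eq_indicator]
  exact integral_indicator ⟨has, hsb⟩

theorem integral_ind_sub_mul' {a s b : ℝ} (has : a ≤ s) (hsb : s ≤ b) (f : ℝ → ℝ) :
    ∫ θ in a..b, ind (θ - s) * f θ = ∫ θ in s..b, f θ := by
  simp_rw [ind_sub_mul_eq_indicator', integral_of_le (has.trans hsb), integral_of_le hsb]
  rw [integral_congr_ae (ae_restrict_of_ae (indicator_ae_eq_of_ae_eq_set Ioi_ae_eq_Ici.symm)),
    setIntegral_indicator measurableSet_Ioi, Ioc_inter_Ioi, sup_eq_right.2 has]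

theorem integral_ind_sub_mul_add {a s b : ℝ} (has : a ≤ s) (hsb : s ≤ b) {f g : ℝ → ℝ}
    (hf : IntervalIntegrable f volume a b) (hg : IntervalIntegrable g volume a b) :
    ∫ θ in a..b, (ind (s - θ) * f θ + ind (θ - s) * g θ)
      = (∫ θ in a..s, f θ) + ∫ θ in s..b, g θ := by
  have hf' : IntervalIntegrable (fun θ => ind (s - θ) * f θ) volume a b := by
    simp_rw [ind_sub_mul_eq_indicator]
    exact ⟨hf.1.indicator measurableSet_Iic, hf.2.indicator measurableSet_Iic⟩
  have hg' : IntervalIntegrable (fun θ => ind (θ - s) * g θ) volume a b := by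
    simp_rw [ind_sub_mul_eq_indicator']
    exact ⟨hg.1.indicator measurableSet_Ici, hg.2.indicator measurableSet_Ici⟩
  rw [intervalIntegral.integral_add hf' hg', integral_ind_sub_mul has hsb,
    integral_ind_sub_mul' has hsb]

theorem integral_mul_primitive {a η b : ℝ} (hηb : η ≤ b) {m u : ℝ → ℝ} (hm : Continuous m)
    (hu : Continuous u) :
    ∫ θ in η..b, m θ * ∫ ζ in a..θ, u ζ
      = (∫ ζ in a..η, u ζ) * (∫ θ in η..b, m θ) + ∫ ζ in η..b, u ζ * ∫ θ in ζ..b, m θ := by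
  have hswap := intervalIntegral_triangle_swap hηb (f := fun ζ θ => u ζ * m θ) (by fun_prop)
  simp_rw [intervalIntegral.integral_const_mul] at hswap
  calc ∫ θ in η..b, m θ * ∫ ζ in a..θ, u ζ
      = ∫ θ in η..b, (m θ * ∫ ζ in a..η, u ζ) + ∫ ζ in η..θ, u ζ * m θ := by
        refine integral_congr fun θ _ => ?_
        rw [← integral_add_adjacent_intervals (hu.intervalIntegrable a η)
          (hu.intervalIntegrable η θ), intervalIntegral.integral_mul_const]
        ring
    _ = _ := by
        rw [intervalIntegral.integral_add (Continuous.intervalIntegrable (by fun_prop) _ _)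
            (Continuous.intervalIntegrable (by fun_prop) _ _),
          intervalIntegral.integral_mul_const, mul_comm, hswap]

theorem integral_sub_mul_integral {η b : ℝ} (hηb : η ≤ b) {N : ℝ → ℝ → ℝ} {g : ℝ → ℝ}
    (hN : Continuous (uncurry N)) (hg : Continuous g) :
    ∫ s in η..b, (s - η) * ∫ θ in s..b, N s θ * g θ
      = ∫ θ in η..b, (∫ s in η..θ, (s - η) * N s θ) * g θ := by
  simp_rw [← intervalIntegral.integral_const_mul]
  rw [intervalIntegral_triangle_swap hηb (by fun_prop)]
  refine integral_congr fun θ _ => ?_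
  simp only [← intervalIntegral.integral_mul_const, mul_assoc]

theorem integral_volterra_mul {a b : ℝ} (hab : a ≤ b) {u Φ : ℝ → ℝ} (hu : Continuous u)
    (hΦ : Continuous Φ) :
    ∫ s in a..b, (∫ η in a..s, (s - η) * u η) * Φ s
      = ∫ η in a..b, u η * ∫ s in η..b, (s - η) * Φ s := by
  simp_rw [← intervalIntegral.integral_const_mul, ← intervalIntegral.integral_mul_const]
  rw [intervalIntegral_triangle_swap hab (by fun_prop)]
  exact integral_congr fun s _ => integral_congr fun η _ => by ring

/-- In the notation of the statement, the kernel is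
`K s θ = ind (s - θ) * tailKernel b N s s + ind (θ - s) * tailKernel b N s θ`. -/
noncomputable def tailKernel (b : ℝ) (N : ℝ → ℝ → ℝ) (s θ : ℝ) : ℝ :=
  ∫ ζ in θ..b, ∫ η in s..ζ, (η - s) * N η ζ

theorem continuous_tailKernel (b : ℝ) {N : ℝ → ℝ → ℝ} (hN : Continuous (uncurry N)) (s : ℝ) :
    Continuous (tailKernel b N s) :=
  continuous_parametric_intervalIntegral_of_continuous_bounds
    (f := fun _ ζ => ∫ η in s..ζ, (η - s) * N η ζ) (by fun_prop) continuous_id continuous_const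

theorem integral_ind_tailKernel {a b s : ℝ} (hs : s ∈ Icc a b) {N : ℝ → ℝ → ℝ} {u : ℝ → ℝ}
    (hN : Continuous (uncurry N)) (hu : Continuous u) :
    ∫ θ in a..b,
        u s * (ind (s - θ) * tailKernel b N s s + ind (θ - s) * tailKernel b N s θ) * u θ
      = u s * ((∫ θ in a..s, u θ) * tailKernel b N s s
          + ∫ θ in s..b, u θ * tailKernel b N s θ) := by
  have hT := continuous_tailKernel b hN s
  calc _ = u s * ∫ θ in a..b, (ind (s - θ) * (tailKernel b N s s * u θ)
                + ind (θ - s) * (u θ * tailKernel b N s θ)) := by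
        rw [← intervalIntegral.integral_const_mul]
        exact integral_congr fun θ _ => by ring
    _ = _ := by
        rw [integral_ind_sub_mul_add hs.1 hs.2 (Continuous.intervalIntegrable (by fun_prop) _ _)
          (Continuous.intervalIntegrable (by fun_prop) _ _), intervalIntegral.integral_const_mul,
          mul_comm (tailKernel b N s s)]

theorem integral_volterra_eq_integral_kernel {a b : ℝ} (hab : a ≤ b) {N : ℝ → ℝ → ℝ}
    {u : ℝ → ℝ} (hN : Continuous (uncurry N)) (hu : Continuous u) :
    ∫ s in a..b, ∫ θ in s..b, (∫ η in a..s, (s - η) * u η) * N s θ * (∫ ζ in a..θ, u ζ)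
      = ∫ s in a..b, ∫ θ in a..b,
          u s * (ind (s - θ) * tailKernel b N s s + ind (θ - s) * tailKernel b N s θ) * u θ := by
  set Φ := fun s => ∫ θ in s..b, N s θ * ∫ ζ in a..θ, u ζ
  have hΦ : Continuous Φ := continuous_parametric_intervalIntegral_of_continuous_bounds
    (f := fun s θ => N s θ * ∫ ζ in a..θ, u ζ) (by fun_prop) continuous_id continuous_const
  calc _ = ∫ s in a..b, (∫ η in a..s, (s - η) * u η) * Φ s :=
        integral_congr fun s _ => by simp only [Φ, mul_assoc, intervalIntegral.integral_const_mul]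
    _ = ∫ η in a..b, u η * ∫ s in η..b, (s - η) * Φ s := integral_volterra_mul hab hu hΦ
    _ = _ := by
        refine integral_congr fun η hη => ?_
        rw [uIcc_of_le hab] at hη
        rw [integral_sub_mul_integral hη.2 hN (by fun_prop),
          integral_mul_primitive hη.2 (by fun_prop) hu, integral_ind_tailKernel hη hN hu]
        rfl

theorem exists_continuous_eqOn_Icc {a b : ℝ} (hab : a ≤ b) {u : ℝ → ℝ}
    (hu : ContinuousOn u (Icc a b)) : ∃ v : ℝ → ℝ, Continuous v ∧ EqOn v u (Icc a b) :=
  ⟨fun x => u (projIcc a b hab x),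
    hu.comp_continuous (continuous_subtype_val.comp continuous_projIcc)
      fun x => (projIcc a b hab x).2,
    fun x hx => by simp [projIcc_of_mem hab hx]⟩

theorem exists_continuous_eqOn_Icc_prod {a b : ℝ} (hab : a ≤ b) {N : ℝ → ℝ → ℝ}
    (hN : ContinuousOn (uncurry N) (Icc a b ×ˢ Icc a b)) :
    ∃ P : ℝ → ℝ → ℝ, Continuous (uncurry P) ∧
      ∀ x ∈ Icc a b, ∀ y ∈ Icc a b, P x y = N x y := by
  have hproj : Continuous fun x => (projIcc a b hab x : ℝ) :=
    continuous_subtype_val.comp continuous_projIcc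
  refine ⟨fun x y => N (projIcc a b hab x) (projIcc a b hab y),
    hN.comp_continuous ((hproj.comp continuous_fst).prodMk (hproj.comp continuous_snd))
      fun p => ⟨(projIcc a b hab p.1).2, (projIcc a b hab p.2).2⟩, fun x hx y hy => ?_⟩
  simp [projIcc_of_mem hab hx, projIcc_of_mem hab hy]

theorem integral_volterra_congr {a b : ℝ} (hab : a ≤ b) {N P : ℝ → ℝ → ℝ} {u v : ℝ → ℝ}
    (hvu : EqOn v u (Icc a b)) (hPN : ∀ x ∈ Icc a b, ∀ y ∈ Icc a b, P x y = N x y) :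
    ∫ s in a..b, ∫ θ in s..b, (∫ η in a..s, (s - η) * v η) * P s θ * (∫ ζ in a..θ, v ζ)
      = ∫ s in a..b, ∫ θ in s..b, (∫ η in a..s, (s - η) * u η) * N s θ * (∫ ζ in a..θ, u ζ) := by
  have hsub : ∀ t ∈ Icc a b, uIcc a t ⊆ Icc a b :=
    fun t ht => uIcc_subset_Icc (left_mem_Icc.2 hab) ht
  refine integral_congr fun s hs => integral_congr fun θ hθ => ?_
  rw [uIcc_of_le hab] at hs
  have hθ' : θ ∈ Icc a b := uIcc_subset_Icc hs (right_mem_Icc.2 hab) hθ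
  have hprimitive_s : ∫ η in a..s, (s - η) * v η = ∫ η in a..s, (s - η) * u η :=
    integral_congr fun η hη => by rw [hvu (hsub s hs hη)]
  have hprimitive_θ : ∫ ζ in a..θ, v ζ = ∫ ζ in a..θ, u ζ :=
    integral_congr fun ζ hζ => hvu (hsub θ hθ' hζ)
  simp only [hprimitive_s, hprimitive_θ, hPN s hs θ hθ']

theorem tailKernel_congr {a b s θ : ℝ} {N P : ℝ → ℝ → ℝ}
    (hPN : ∀ x ∈ Icc a b, ∀ y ∈ Icc a b, P x y = N x y) (hs : s ∈ Icc a b)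
    (hθ : θ ∈ Icc a b) : tailKernel b P s θ = tailKernel b N s θ := by
  refine integral_congr fun ζ hζ => integral_congr fun η hη => ?_
  have hζ' : ζ ∈ Icc a b := uIcc_subset_Icc hθ ⟨hs.1.trans hs.2, le_rfl⟩ hζ
  simp only [hPN η (uIcc_subset_Icc hs hζ' hη) ζ hζ']

theorem stmt10 (a b : ℝ) (hab : a < b) (N : ℝ → ℝ → ℝ) (u : ℝ → ℝ)
    (hN : ContinuousOn (fun p : ℝ × ℝ => N p.1 p.2) (Set.Icc a b ×ˢ Set.Icc a b))
    (hu : ContinuousOn u (Set.Icc a b)) :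
    ∫ s in a..b, ∫ θ in s..b, (∫ η in a..s, (s - η) * u η) * N s θ * (∫ ζ in a..θ, u ζ)
      = ∫ s in a..b, ∫ θ in a..b,
          u s * (ind (s - θ) * (∫ ζ in s..b, ∫ η in s..ζ, (η - s) * N η ζ)
                 + ind (θ - s) * (∫ ζ in θ..b, ∫ η in s..ζ, (η - s) * N η ζ)) * u θ := by
  obtain ⟨v, hv, hvu⟩ := exists_continuous_eqOn_Icc hab.le hu
  obtain ⟨P, hP, hPN⟩ := exists_continuous_eqOn_Icc_prod hab.le hN
  rw [← integral_volterra_congr hab.le hvu hPN, integral_volterra_eq_integral_kernel hab.le hP hv]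
  refine integral_congr fun s hs => integral_congr fun θ hθ => ?_
  rw [uIcc_of_le hab.le] at hs hθ
  rw [hvu hs, hvu hθ, tailKernel_congr hPN hs hs, tailKernel_congr hPN hs hθ]
  rfl
end
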